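/- Let τ > 0, let (u1, v1) be a sub-solution and (u2, v2) a super-solution of system (N) on [0, τ), both with nonnegative components (u_i(t,x) ≥ 0 and v_i(t,x) ≥ 0 for all t ∈ [0,τ), x ∈ D̄, i = 1,2). If u1(0,x) ≤ u2(0,x) and v1(0,x) ≥ v2(0,x) for all x ∈ D̄, then u1(t,x) ≤ u2(t,x) and v1(t,x) ≥ v2(t,x) for all t ∈ (0, τ) and x ∈ D̄. -/

import Mathlib

open MeasureTheory Filter Topology

noncomputable section

/-- A super-solution of the Neumann-type nonlocal dispersal competition system
on `[0, τ)`: the first inequality is `≥`, the second is `≤`. -/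
def IsSuperSolN (N : ℕ) (D : Set (EuclideanSpace ℝ (Fin N)))
    (κ : EuclideanSpace ℝ (Fin N) → ℝ) (ν1 ν2 : ℝ)
    (a1 a2 b1 b2 c1 c2 : ℝ → EuclideanSpace ℝ (Fin N) → ℝ)
    (τ : ℝ) (u v : ℝ → EuclideanSpace ℝ (Fin N) → ℝ) : Prop :=
  ContinuousOn (fun p : ℝ × EuclideanSpace ℝ (Fin N) => u p.1 p.2) (Set.Ico 0 τ ×ˢ closure D) ∧
  ContinuousOn (fun p : ℝ × EuclideanSpace ℝ (Fin N) => v p.1 p.2) (Set.Ico 0 τ ×ˢ closure D) ∧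
  (∀ x ∈ closure D, ∀ t ∈ Set.Ico (0:ℝ) τ,
    DifferentiableWithinAt ℝ (fun s => u s x) (Set.Ico 0 τ) t ∧
    DifferentiableWithinAt ℝ (fun s => v s x) (Set.Ico 0 τ) t) ∧
  (∀ t ∈ Set.Ioo (0:ℝ) τ, ∀ x ∈ closure D,
    ν1 * (∫ y in D, κ (y - x) * (u t y - u t x)) +
        u t x * (a1 t x - b1 t x * u t x - c1 t x * v t x)
      ≤ derivWithin (fun s => u s x) (Set.Ico 0 τ) t ∧
    derivWithin (fun s => v s x) (Set.Ico 0 τ) t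
      ≤ ν2 * (∫ y in D, κ (y - x) * (v t y - v t x)) +
        v t x * (a2 t x - b2 t x * u t x - c2 t x * v t x))

/-- A sub-solution of the Neumann-type nonlocal dispersal competition system
on `[0, τ)`: the first inequality is `≤`, the second is `≥`. -/
def IsSubSolN (N : ℕ) (D : Set (EuclideanSpace ℝ (Fin N)))
    (κ : EuclideanSpace ℝ (Fin N) → ℝ) (ν1 ν2 : ℝ)
    (a1 a2 b1 b2 c1 c2 : ℝ → EuclideanSpace ℝ (Fin N) → ℝ)
    (τ : ℝ) (u v : ℝ → EuclideanSpace ℝ (Fin N) → ℝ) : Prop :=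
  ContinuousOn (fun p : ℝ × EuclideanSpace ℝ (Fin N) => u p.1 p.2) (Set.Ico 0 τ ×ˢ closure D) ∧
  ContinuousOn (fun p : ℝ × EuclideanSpace ℝ (Fin N) => v p.1 p.2) (Set.Ico 0 τ ×ˢ closure D) ∧
  (∀ x ∈ closure D, ∀ t ∈ Set.Ico (0:ℝ) τ,
    DifferentiableWithinAt ℝ (fun s => u s x) (Set.Ico 0 τ) t ∧
    DifferentiableWithinAt ℝ (fun s => v s x) (Set.Ico 0 τ) t) ∧
  (∀ t ∈ Set.Ioo (0:ℝ) τ, ∀ x ∈ closure D,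
    derivWithin (fun s => u s x) (Set.Ico 0 τ) t
      ≤ ν1 * (∫ y in D, κ (y - x) * (u t y - u t x)) +
        u t x * (a1 t x - b1 t x * u t x - c1 t x * v t x) ∧
    ν2 * (∫ y in D, κ (y - x) * (v t y - v t x)) +
        v t x * (a2 t x - b2 t x * u t x - c2 t x * v t x)
      ≤ derivWithin (fun s => v s x) (Set.Ico 0 τ) t)

/-!
Fix `t₀ < τ`, let `M` bound `a₁ + c₁ u₁` and `a₂ + b₂ v₂` on the cylinder `[0, t₀] × D̄` and
put `λ = M + 1`. The function `e^{-λt} min (u₂ - u₁, v₁ - v₂)` attains its minimum on that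
compact cylinder, at some `(t, x)`. If the minimum were negative, then `t > 0`, and the
component `w` realising it satisfies: the nonlocal term of `w` at `x` is nonnegative (spatial
minimum), `∂ₜ w ≤ λ w` (temporal minimum of `e^{-λt} w`), and, because the system is
competitive, the difference of the reaction terms is at least `M w`. Hence `λ w ≤ M w`, which
forces `w ≥ 0`.
-/

open Set Real

theorem IsMinOn.of_le_of_eq {α β : Type*} [Preorder β] {f g : α → β} {s : Set α} {a : α}
    (hf : IsMinOn f s a) (hle : ∀ x ∈ s, f x ≤ g x) (ha : g a = f a) : IsMinOn g s a :=
  isMinOn_iff.2 fun x hx => ha.le.trans ((isMinOn_iff.1 hf x hx).trans (hle x hx))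

theorem HasDerivWithinAt.nonpos_of_isMinOn_Icc {f : ℝ → ℝ} {f' a b : ℝ} (hab : a < b)
    (hf : HasDerivWithinAt f f' (Icc a b) b) (hmin : IsMinOn f (Icc a b) b) : f' ≤ 0 := by
  have hcone : a - b ∈ posTangentConeAt (Icc a b) b :=
    sub_mem_posTangentConeAt_of_segment_subset (segment_eq_Icc' b a ▸ by simp [hab.le])
  have h := hmin.localize.hasFDerivWithinAt_nonneg hf hcone
  rw [ContinuousLinearMap.toSpanSingleton_apply, smul_eq_mul] at h
  exact nonpos_of_mul_nonneg_right h (sub_neg.2 hab)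

theorem HasDerivWithinAt.le_mul_of_isMinOn_exp_mul {f : ℝ → ℝ} {f' lam a b : ℝ} (hab : a < b)
    (hf : HasDerivWithinAt f f' (Icc a b) b)
    (hmin : IsMinOn (fun s => Real.exp (-lam * s) * f s) (Icc a b) b) : f' ≤ lam * f b := by
  have hexp : HasDerivWithinAt (fun s => Real.exp (-lam * s)) (Real.exp (-lam * b) * -lam)
      (Icc a b) b := by
    simpa using ((hasDerivAt_id b).const_mul (-lam)).exp.hasDerivWithinAt
  have h := (hexp.mul hf).nonpos_of_isMinOn_Icc hab hmin
  nlinarith [exp_pos (-lam * b)]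

theorem mul_sub_le_reaction_sub {p₁ p₂ q₁ q₂ a b c M : ℝ} (hp₁ : 0 ≤ p₁) (hp₂ : 0 ≤ p₂)
    (hq₂ : 0 ≤ q₂) (hb : 0 ≤ b) (hc : 0 ≤ c) (hM : a + c * p₁ ≤ M) (hneg : p₂ - p₁ ≤ 0)
    (hq : p₂ - p₁ ≤ q₁ - q₂) :
    M * (p₂ - p₁) ≤ p₂ * (a - b * p₂ - c * q₂) - p₁ * (a - b * p₁ - c * q₁) := by
  have hcoef : a - b * (p₁ + p₂) - c * q₂ + c * p₁ ≤ M := by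
    linarith [mul_nonneg hb (add_nonneg hp₁ hp₂), mul_nonneg hc hq₂]
  calc M * (p₂ - p₁) ≤ (a - b * (p₁ + p₂) - c * q₂ + c * p₁) * (p₂ - p₁) :=
        mul_le_mul_of_nonpos_right hcoef hneg
    _ ≤ (a - b * (p₁ + p₂) - c * q₂) * (p₂ - p₁) + c * p₁ * (q₁ - q₂) := by
        linarith [mul_le_mul_of_nonneg_left hq (mul_nonneg hc hp₁)]
    _ = p₂ * (a - b * p₂ - c * q₂) - p₁ * (a - b * p₁ - c * q₁) := by ring

section Nonlocal

variable {E : Type*} [NormedAddCommGroup E] [MeasurableSpace E] [BorelSpace E]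
  {μ : Measure E} [IsFiniteMeasureOnCompacts μ] {D : Set E} {κ : E → ℝ}

theorem integrableOn_kernel_mul_sub (hD : IsCompact (closure D)) (hκ : Continuous κ)
    {g : E → ℝ} (hg : ContinuousOn g (closure D)) (x : E) :
    IntegrableOn (fun y => κ (y - x) * (g y - g x)) D μ :=
  (((hκ.comp (continuous_sub_right x)).continuousOn.mul
    (hg.sub continuousOn_const)).integrableOn_compact hD).mono_set subset_closure

theorem setIntegral_kernel_mul_sub_mono (hD : IsCompact (closure D)) (hκc : Continuous κ)
    (hκ : ∀ z, 0 ≤ κ z) {g h : E → ℝ} (hg : ContinuousOn g (closure D))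
    (hh : ContinuousOn h (closure D)) {x : E}
    (hle : ∀ y ∈ closure D, g x - h x ≤ g y - h y) :
    ∫ y in D, κ (y - x) * (h y - h x) ∂μ ≤ ∫ y in D, κ (y - x) * (g y - g x) ∂μ := by
  refine integral_mono_ae (integrableOn_kernel_mul_sub hD hκc hh x)
    (integrableOn_kernel_mul_sub hD hκc hg x) ?_
  refine ae_restrict_of_ae_restrict_of_subset subset_closure
    (ae_restrict_of_forall_mem isClosed_closure.measurableSet fun y hy => ?_)
  exact mul_le_mul_of_nonneg_left (by linarith [hle y hy]) (hκ _)

theorem nonlocal_sub_nonneg_of_isMinOn (hD : IsCompact (closure D)) (hκc : Continuous κ)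
    (hκ : ∀ z, 0 ≤ κ z) {ν lam M R₁ R₂ d₁ d₂ a t : ℝ} {p₁ p₂ : ℝ → E → ℝ} {x : E}
    (hx : x ∈ closure D) (hat : a < t) (hν : 0 ≤ ν) (hM : M < lam)
    (hp₁ : ContinuousOn (p₁ t) (closure D)) (hp₂ : ContinuousOn (p₂ t) (closure D))
    (hd₁ : HasDerivWithinAt (p₁ · x) d₁ (Icc a t) t)
    (hd₂ : HasDerivWithinAt (p₂ · x) d₂ (Icc a t) t)
    (hsub : d₁ ≤ ν * ∫ y in D, κ (y - x) * (p₁ t y - p₁ t x) ∂μ + R₁)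
    (hsup : ν * ∫ y in D, κ (y - x) * (p₂ t y - p₂ t x) ∂μ + R₂ ≤ d₂)
    (hR : M * (p₂ t x - p₁ t x) ≤ R₂ - R₁)
    (hmin : IsMinOn (fun q : ℝ × E => Real.exp (-lam * q.1) * (p₂ q.1 q.2 - p₁ q.1 q.2))
      (Icc a t ×ˢ closure D) (t, x)) :
    0 ≤ p₂ t x - p₁ t x := by
  have htime : d₂ - d₁ ≤ lam * (p₂ t x - p₁ t x) :=
    (hd₂.sub hd₁).le_mul_of_isMinOn_exp_mul (f := fun s => p₂ s x - p₁ s x) hat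
      (isMinOn_iff.2 fun s hs => isMinOn_iff.1 hmin (s, x) ⟨hs, hx⟩)
  have hspace : ∀ y ∈ closure D, p₂ t x - p₁ t x ≤ p₂ t y - p₁ t y := fun y hy =>
    le_of_mul_le_mul_left (isMinOn_iff.1 hmin (t, y) ⟨right_mem_Icc.2 hat.le, hy⟩) (exp_pos _)
  have hI := mul_le_mul_of_nonneg_left
    (setIntegral_kernel_mul_sub_mono (μ := μ) hD hκc hκ hp₂ hp₁ hspace) hν
  exact nonneg_of_mul_nonneg_right (by linarith) (sub_pos.2 hM)

end Nonlocal

section Competition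

variable {N : ℕ} {D : Set (EuclideanSpace ℝ (Fin N))} {κ : EuclideanSpace ℝ (Fin N) → ℝ}
  {ν1 ν2 : ℝ} {a1 a2 b1 b2 c1 c2 : ℝ → EuclideanSpace ℝ (Fin N) → ℝ} {τ : ℝ}
  {u1 v1 u2 v2 : ℝ → EuclideanSpace ℝ (Fin N) → ℝ}

theorem exists_reaction_bound (hD : IsCompact (closure D)) {t₀ : ℝ} (ht₀ : t₀ < τ)
    (hc : ∀ f ∈ [a1, a2, b1, b2, c1, c2],
      ContinuousOn (fun p : ℝ × EuclideanSpace ℝ (Fin N) => f p.1 p.2) (univ ×ˢ closure D))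
    (hu1 : ContinuousOn (fun p : ℝ × EuclideanSpace ℝ (Fin N) => u1 p.1 p.2)
      (Ico 0 τ ×ˢ closure D))
    (hv2 : ContinuousOn (fun p : ℝ × EuclideanSpace ℝ (Fin N) => v2 p.1 p.2)
      (Ico 0 τ ×ˢ closure D)) :
    ∃ M, ∀ q ∈ Icc 0 t₀ ×ˢ closure D,
      a1 q.1 q.2 + c1 q.1 q.2 * u1 q.1 q.2 ≤ M ∧ a2 q.1 q.2 + b2 q.1 q.2 * v2 q.1 q.2 ≤ M := by
  have hK : IsCompact (Icc 0 t₀ ×ˢ closure D) := isCompact_Icc.prod hD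
  have hKu : Icc 0 t₀ ×ˢ closure D ⊆ univ ×ˢ closure D := prod_mono (subset_univ _) subset_rfl
  have hKτ : Icc 0 t₀ ×ˢ closure D ⊆ Ico 0 τ ×ˢ closure D :=
    prod_mono (Icc_subset_Ico_right ht₀) subset_rfl
  obtain ⟨M₁, hM₁⟩ := hK.bddAbove_image
    (((hc a1 (by simp)).mono hKu).add (((hc c1 (by simp)).mono hKu).mul (hu1.mono hKτ)))
  obtain ⟨M₂, hM₂⟩ := hK.bddAbove_image
    (((hc a2 (by simp)).mono hKu).add (((hc b2 (by simp)).mono hKu).mul (hv2.mono hKτ)))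
  exact ⟨max M₁ M₂, fun q hq => ⟨(hM₁ (mem_image_of_mem _ hq)).trans (le_max_left _ _),
    (hM₂ (mem_image_of_mem _ hq)).trans (le_max_right _ _)⟩⟩

theorem min_gap_nonneg_of_isMinOn (hD : IsCompact (closure D)) (hκc : Continuous κ)
    (hκ : ∀ z, 0 ≤ κ z) (hν1 : 0 ≤ ν1) (hν2 : 0 ≤ ν2)
    (hsub : IsSubSolN N D κ ν1 ν2 a1 a2 b1 b2 c1 c2 τ u1 v1)
    (hsup : IsSuperSolN N D κ ν1 ν2 a1 a2 b1 b2 c1 c2 τ u2 v2)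
    (hu0 : ∀ x ∈ closure D, u1 0 x ≤ u2 0 x) (hv0 : ∀ x ∈ closure D, v2 0 x ≤ v1 0 x)
    {M lam t : ℝ} {x : EuclideanSpace ℝ (Fin N)} (ht : 0 ≤ t) (htτ : t < τ)
    (hx : x ∈ closure D) (hu1 : 0 ≤ u1 t x) (hv1 : 0 ≤ v1 t x) (hu2 : 0 ≤ u2 t x)
    (hv2 : 0 ≤ v2 t x) (hb1 : 0 ≤ b1 t x) (hb2 : 0 ≤ b2 t x) (hc1 : 0 ≤ c1 t x)
    (hc2 : 0 ≤ c2 t x) (hM₁ : a1 t x + c1 t x * u1 t x ≤ M)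
    (hM₂ : a2 t x + b2 t x * v2 t x ≤ M) (hlam : M < lam)
    (hmin : IsMinOn (fun q : ℝ × EuclideanSpace ℝ (Fin N) =>
      exp (-lam * q.1) * min (u2 q.1 q.2 - u1 q.1 q.2) (v1 q.1 q.2 - v2 q.1 q.2))
      (Icc 0 t ×ˢ closure D) (t, x)) :
    0 ≤ min (u2 t x - u1 t x) (v1 t x - v2 t x) := by
  obtain ⟨hu1c, hv1c, hdiff1, hineq1⟩ := hsub
  obtain ⟨hu2c, hv2c, hdiff2, hineq2⟩ := hsup
  by_contra! hneg
  have htpos : 0 < t := ht.lt_of_ne fun h => hneg.not_ge <|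
    h ▸ le_min (sub_nonneg.2 (hu0 x hx)) (sub_nonneg.2 (hv0 x hx))
  have htIoo : t ∈ Ioo 0 τ := ⟨htpos, htτ⟩
  have hIco : Icc 0 t ⊆ Ico 0 τ := Icc_subset_Ico_right htτ
  have hslice : ∀ w : ℝ → EuclideanSpace ℝ (Fin N) → ℝ,
      ContinuousOn (fun p : ℝ × EuclideanSpace ℝ (Fin N) => w p.1 p.2) (Ico 0 τ ×ˢ closure D) →
      ContinuousOn (w t) (closure D) := fun w hw =>
    hw.comp (Continuous.prodMk_right t).continuousOn fun y hy => ⟨⟨ht, htτ⟩, hy⟩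
  rcases min_cases (u2 t x - u1 t x) (v1 t x - v2 t x) with ⟨hm, hle⟩ | ⟨hm, hlt⟩
  · rw [hm] at hneg
    refine hneg.not_ge (nonlocal_sub_nonneg_of_isMinOn hD hκc hκ hx htpos hν1 hlam
      (hslice _ hu1c) (hslice _ hu2c) ((hdiff1 x hx t ⟨ht, htτ⟩).1.hasDerivWithinAt.mono hIco)
      ((hdiff2 x hx t ⟨ht, htτ⟩).1.hasDerivWithinAt.mono hIco) (hineq1 t htIoo x hx).1
      (hineq2 t htIoo x hx).1 (mul_sub_le_reaction_sub hu1 hu2 hv2 hb1 hc1 hM₁ hneg.le hle) ?_)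
    exact hmin.of_le_of_eq
      (fun q _ => mul_le_mul_of_nonneg_left (min_le_left _ _) (exp_pos _).le) (by simp only [hm])
  · rw [hm] at hneg
    refine hneg.not_ge (nonlocal_sub_nonneg_of_isMinOn hD hκc hκ hx htpos hν2 hlam
      (hslice _ hv2c) (hslice _ hv1c) ((hdiff2 x hx t ⟨ht, htτ⟩).2.hasDerivWithinAt.mono hIco)
      ((hdiff1 x hx t ⟨ht, htτ⟩).2.hasDerivWithinAt.mono hIco) (hineq2 t htIoo x hx).2
      (hineq1 t htIoo x hx).2 ?_ ?_)
    · linarith [mul_sub_le_reaction_sub hv2 hv1 hu1 hc2 hb2 hM₂ hneg.le hlt.le]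
    · exact hmin.of_le_of_eq
        (fun q _ => mul_le_mul_of_nonneg_left (min_le_right _ _) (exp_pos _).le) (by simp only [hm])

end Competition

theorem sub_super_solution_comparison_neumann_general
    (N : ℕ)
    (D : Set (EuclideanSpace ℝ (Fin N)))
    (hDbd : Bornology.IsBounded D)
    (κ : EuclideanSpace ℝ (Fin N) → ℝ) (hκc : Continuous κ)
    (r : ℝ)
    (hκpos : ∀ z, ‖z‖ < r → 0 < κ z)
    (hκsupp : ∀ z, r ≤ ‖z‖ → κ z = 0)
    (ν1 ν2 : ℝ) (hν1 : 0 < ν1) (hν2 : 0 < ν2)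
    (a1 a2 b1 b2 c1 c2 : ℝ → EuclideanSpace ℝ (Fin N) → ℝ)
    (hc : ∀ f ∈ [a1, a2, b1, b2, c1, c2],
      ContinuousOn (fun p : ℝ × EuclideanSpace ℝ (Fin N) => f p.1 p.2)
        ((Set.univ : Set ℝ) ×ˢ closure D))
    (hpos : ∀ f ∈ [a1, a2, b1, b2, c1, c2], ∀ t, ∀ x ∈ closure D, 0 < f t x)
    (τ : ℝ)
    (u1 v1 u2 v2 : ℝ → EuclideanSpace ℝ (Fin N) → ℝ)
    (hsub : IsSubSolN N D κ ν1 ν2 a1 a2 b1 b2 c1 c2 τ u1 v1)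
    (hsup : IsSuperSolN N D κ ν1 ν2 a1 a2 b1 b2 c1 c2 τ u2 v2)
    (hnn1 : ∀ t ∈ Set.Ico (0:ℝ) τ, ∀ x ∈ closure D, 0 ≤ u1 t x ∧ 0 ≤ v1 t x)
    (hnn2 : ∀ t ∈ Set.Ico (0:ℝ) τ, ∀ x ∈ closure D, 0 ≤ u2 t x ∧ 0 ≤ v2 t x)
    (hu0 : ∀ x ∈ closure D, u1 0 x ≤ u2 0 x)
    (hv0 : ∀ x ∈ closure D, v2 0 x ≤ v1 0 x) :
    ∀ t ∈ Set.Ioo (0:ℝ) τ, ∀ x ∈ closure D, u1 t x ≤ u2 t x ∧ v2 t x ≤ v1 t x := by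
  intro t₀ ht₀ x₀ hx₀
  have hD : IsCompact (closure D) := hDbd.isCompact_closure
  have hκ : ∀ z, 0 ≤ κ z := fun z =>
    (lt_or_ge ‖z‖ r).elim (fun h => (hκpos z h).le) fun h => (hκsupp z h).ge
  have hKτ : Icc 0 t₀ ×ˢ closure D ⊆ Ico 0 τ ×ˢ closure D :=
    prod_mono (Icc_subset_Ico_right ht₀.2) subset_rfl
  have hmem₀ : (t₀, x₀) ∈ Icc 0 t₀ ×ˢ closure D := ⟨⟨ht₀.1.le, le_rfl⟩, hx₀⟩
  obtain ⟨M, hM⟩ := exists_reaction_bound hD ht₀.2 hc hsub.1 hsup.2.1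
  obtain ⟨⟨t, x⟩, ⟨⟨ht, htt₀⟩, hx⟩, hmin⟩ := (isCompact_Icc.prod hD).exists_isMinOn ⟨_, hmem₀⟩
    (f := fun q => exp (-(M + 1) * q.1) * min (u2 q.1 q.2 - u1 q.1 q.2) (v1 q.1 q.2 - v2 q.1 q.2))
    (((continuous_const.mul continuous_fst).rexp.continuousOn).mul
      ((ContinuousOn.inf (hsup.1.sub hsub.1) (hsub.2.1.sub hsup.2.1)).mono hKτ))
  have htτ : t < τ := htt₀.trans_lt ht₀.2
  obtain ⟨hu1, hv1⟩ := hnn1 t ⟨ht, htτ⟩ x hx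
  obtain ⟨hu2, hv2⟩ := hnn2 t ⟨ht, htτ⟩ x hx
  obtain ⟨hM₁, hM₂⟩ := hM (t, x) ⟨⟨ht, htt₀⟩, hx⟩
  have hgap := min_gap_nonneg_of_isMinOn hD hκc hκ hν1.le hν2.le hsub hsup hu0 hv0 ht htτ hx
    hu1 hv1 hu2 hv2 (hpos b1 (by simp) t x hx).le (hpos b2 (by simp) t x hx).le
    (hpos c1 (by simp) t x hx).le (hpos c2 (by simp) t x hx).le hM₁ hM₂ (lt_add_one M)
    (hmin.on_subset (prod_mono (Icc_subset_Icc_right htt₀) subset_rfl))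
  have hgap₀ : 0 ≤ min (u2 t₀ x₀ - u1 t₀ x₀) (v1 t₀ x₀ - v2 t₀ x₀) :=
    nonneg_of_mul_nonneg_right ((mul_nonneg (exp_pos _).le hgap).trans (hmin hmem₀)) (exp_pos _)
  exact ⟨sub_nonneg.1 (hgap₀.trans (min_le_left _ _)),
    sub_nonneg.1 (hgap₀.trans (min_le_right _ _))⟩

theorem sub_super_solution_comparison_neumann
    (N : ℕ) (hN : 1 ≤ N)
    (D : Set (EuclideanSpace ℝ (Fin N)))
    (hDo : IsOpen D) (hDne : D.Nonempty) (hDbd : Bornology.IsBounded D)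
    (κ : EuclideanSpace ℝ (Fin N) → ℝ) (hκc : Continuous κ)
    (r : ℝ) (hr : 0 < r)
    (hκpos : ∀ z, ‖z‖ < r → 0 < κ z)
    (hκsupp : ∀ z, r ≤ ‖z‖ → κ z = 0)
    (hκsymm : ∀ z, κ (-z) = κ z)
    (hκint : (∫ z, κ z) = 1)
    (T : ℝ) (hT : 0 < T)
    (ν1 ν2 : ℝ) (hν1 : 0 < ν1) (hν2 : 0 < ν2)
    (a1 a2 b1 b2 c1 c2 : ℝ → EuclideanSpace ℝ (Fin N) → ℝ)
    (hc : ∀ f ∈ [a1, a2, b1, b2, c1, c2],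
      ContinuousOn (fun p : ℝ × EuclideanSpace ℝ (Fin N) => f p.1 p.2)
        ((Set.univ : Set ℝ) ×ˢ closure D))
    (hpos : ∀ f ∈ [a1, a2, b1, b2, c1, c2], ∀ t, ∀ x ∈ closure D, 0 < f t x)
    (hper : ∀ f ∈ [a1, a2, b1, b2, c1, c2], ∀ t x, f (t + T) x = f t x)
    (τ : ℝ) (hτ : 0 < τ)
    (u1 v1 u2 v2 : ℝ → EuclideanSpace ℝ (Fin N) → ℝ)
    (hsub : IsSubSolN N D κ ν1 ν2 a1 a2 b1 b2 c1 c2 τ u1 v1)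
    (hsup : IsSuperSolN N D κ ν1 ν2 a1 a2 b1 b2 c1 c2 τ u2 v2)
    (hnn1 : ∀ t ∈ Set.Ico (0:ℝ) τ, ∀ x ∈ closure D, 0 ≤ u1 t x ∧ 0 ≤ v1 t x)
    (hnn2 : ∀ t ∈ Set.Ico (0:ℝ) τ, ∀ x ∈ closure D, 0 ≤ u2 t x ∧ 0 ≤ v2 t x)
    (hu0 : ∀ x ∈ closure D, u1 0 x ≤ u2 0 x)
    (hv0 : ∀ x ∈ closure D, v2 0 x ≤ v1 0 x) :
    ∀ t ∈ Set.Ioo (0:ℝ) τ, ∀ x ∈ closure D, u1 t x ≤ u2 t x ∧ v2 t x ≤ v1 t x :=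
  sub_super_solution_comparison_neumann_general N D hDbd κ hκc r hκpos hκsupp ν1 ν2 hν1 hν2 a1 a2 b1
    b2 c1 c2 hc hpos τ u1 v1 u2 v2 hsub hsup hnn1 hnn2 hu0 hv0
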